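/- Let h : S × S → S and define Merkle path verification: Verify(j, x, root, path) holds if folding x with the sibling hashes in path (choosing left/right according to the bits of j) yields root. If h is injective, then the honestly generated path Prove(j, xs) for the j-th element of xs verifies against root(xs), and conversely any x, path of the correct length that verifies against root(xs) at index j must satisfy x = xs_j (Merkle tree soundness for injective hash). -/
import Mathlib


/-- Left half of a vector of `2^(k+1)` leaves. -/
def merkleLeft {S : Type*} (k : ℕ) (xs : Fin (2 ^ (k + 1)) → S) : Fin (2 ^ k) → S :=
  fun i => xs ⟨i.1, by
    have h2 : (2 : ℕ) ^ (k + 1) = 2 ^ k * 2 := pow_succ 2 k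
    have := i.2
    omega⟩

/-- Right half of a vector of `2^(k+1)` leaves. -/
def merkleRight {S : Type*} (k : ℕ) (xs : Fin (2 ^ (k + 1)) → S) : Fin (2 ^ k) → S :=
  fun i => xs ⟨2 ^ k + i.1, by
    have h2 : (2 : ℕ) ^ (k + 1) = 2 ^ k * 2 := pow_succ 2 k
    have := i.2
    omega⟩

/-- Merkle root of `2^k` leaves, built with hash `h`. -/
def merkleRoot {S : Type*} (h : S → S → S) : (k : ℕ) → (Fin (2 ^ k) → S) → S
  | 0, xs => xs ⟨0, by norm_num⟩
  | k + 1, xs => h (merkleRoot h k (merkleLeft k xs)) (merkleRoot h k (merkleRight k xs))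

/-- Fold a candidate leaf `x` at index `j` up the tree using the `k` sibling
values `path` (ordered leaf-to-root: `path ⟨k-1,_⟩` is the topmost sibling);
the bits of `j` decide the argument order at each level. -/
def merkleFold {S : Type*} (h : S → S → S) : (k : ℕ) → ℕ → S → (Fin k → S) → S
  | 0, _, x, _ => x
  | k + 1, j, x, path =>
    let top := path ⟨k, Nat.lt_succ_self k⟩
    let rest : Fin k → S := fun i => path i.castSucc
    if j < 2 ^ k then h (merkleFold h k j x rest) top
    else h top (merkleFold h k (j - 2 ^ k) x rest)

/-- Honestly generated Merkle path (list of sibling roots, leaf to root) for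
the `j`-th leaf of `xs`. -/
def merkleProve {S : Type*} (h : S → S → S) : (k : ℕ) → ℕ → (Fin (2 ^ k) → S) → Fin k → S
  | 0, _, _ => fun i => i.elim0
  | k + 1, j, xs => fun i =>
    if hi : i.1 < k then
      if j < 2 ^ k then merkleProve h k j (merkleLeft k xs) ⟨i.1, hi⟩
      else merkleProve h k (j - 2 ^ k) (merkleRight k xs) ⟨i.1, hi⟩
    else
      if j < 2 ^ k then merkleRoot h k (merkleRight k xs)
      else merkleRoot h k (merkleLeft k xs)

lemma merkle_aux {S : Type*} (h : S → S → S)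
    (hinj : Function.Injective (fun p : S × S => h p.1 p.2)) :
    ∀ (k : ℕ) (xs : Fin (2 ^ k) → S) (j : ℕ) (hj : j < 2 ^ k),
    (merkleFold h k j (xs ⟨j, hj⟩) (merkleProve h k j xs) = merkleRoot h k xs) ∧
    (∀ (x : S) (path : Fin k → S),
      merkleFold h k j x path = merkleRoot h k xs → x = xs ⟨j, hj⟩) := by
  have hinj2 : ∀ a b c d : S, h a c = h b d → a = b ∧ c = d := by
    intro a b c d hd
    have := hinj (a₁ := (a, c)) (a₂ := (b, d)) hd
    exact ⟨congrArg Prod.fst this, congrArg Prod.snd this⟩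
  intro k
  induction k with
  | zero =>
    intro xs j hj
    have hj0 : j = 0 := by omega
    subst hj0
    constructor
    · rfl
    · intro x path hx
      exact hx
  | succ k ih =>
    intro xs j hj
    have h2 : (2 : ℕ) ^ (k + 1) = 2 ^ k * 2 := pow_succ 2 k
    by_cases hc : j < 2 ^ k
    · -- left half
      have hrest : (fun i : Fin k =>
          merkleProve h (k + 1) j xs i.castSucc) = merkleProve h k j (merkleLeft k xs) := by
        funext i
        simp only [merkleProve, Fin.castSucc, Fin.coe_castAdd, i.2, dif_pos, if_pos hc]
      have hleaf : xs ⟨j, hj⟩ = merkleLeft k xs ⟨j, hc⟩ := by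
        simp [merkleLeft]
      have htop : merkleProve h (k+1) j xs ⟨k, Nat.lt_succ_self k⟩ =
          merkleRoot h k (merkleRight k xs) := by
        simp [merkleProve, hc]
      constructor
      · simp only [merkleFold, merkleRoot, if_pos hc]
        rw [hrest, hleaf, (ih (merkleLeft k xs) j hc).1, htop]
      · intro x path hx
        simp only [merkleFold, merkleRoot, if_pos hc] at hx
        have h1 : merkleFold h k j x (fun i => path i.castSucc) =
            merkleRoot h k (merkleLeft k xs) := (hinj2 _ _ _ _ hx).1
        have := (ih (merkleLeft k xs) j hc).2 x _ h1
        rw [this, ← hleaf]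
    · -- right half
      have hc2 : j - 2 ^ k < 2 ^ k := by omega
      have hrest : (fun i : Fin k =>
          merkleProve h (k + 1) j xs i.castSucc) = merkleProve h k (j - 2 ^ k) (merkleRight k xs) := by
        funext i
        simp only [merkleProve, Fin.castSucc, Fin.coe_castAdd, i.2, dif_pos, if_neg hc]
      have hleaf : xs ⟨j, hj⟩ = merkleRight k xs ⟨j - 2 ^ k, hc2⟩ := by
        simp only [merkleRight]
        congr 1
        ext
        simp
        omega
      have htop : merkleProve h (k+1) j xs ⟨k, Nat.lt_succ_self k⟩ =
          merkleRoot h k (merkleLeft k xs) := by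
        simp [merkleProve, hc]
      constructor
      · simp only [merkleFold, merkleRoot, if_neg hc]
        rw [hrest, hleaf, (ih (merkleRight k xs) (j - 2 ^ k) hc2).1, htop]
      · intro x path hx
        simp only [merkleFold, merkleRoot, if_neg hc] at hx
        have h1 : merkleFold h k (j - 2 ^ k) x (fun i => path i.castSucc) =
            merkleRoot h k (merkleRight k xs) := (hinj2 _ _ _ _ hx).2
        have := (ih (merkleRight k xs) (j - 2 ^ k) hc2).2 x _ h1
        rw [this, ← hleaf]

/-- Merkle tree completeness and soundness for an injective hash: the honest
path for the `j`-th leaf verifies against the root, and any leaf value and path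
that verify against the root at index `j` must equal the `j`-th leaf. -/
theorem stmt_6 {S : Type*} (h : S → S → S)
    (hinj : Function.Injective (fun p : S × S => h p.1 p.2))
    (k : ℕ) (xs : Fin (2 ^ k) → S) (j : Fin (2 ^ k)) :
    (merkleFold h k j.1 (xs j) (merkleProve h k j.1 xs) = merkleRoot h k xs) ∧
    (∀ (x : S) (path : Fin k → S),
      merkleFold h k j.1 x path = merkleRoot h k xs → x = xs j) := by
  have := merkle_aux h hinj k xs j.1 j.2
  simpa using this
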